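/- arXiv:1606.03580 — 2 statements merged into one kernel-verified Lean document; each statement's English description precedes it below -/
import Mathlib

section
/- For any f̄, ḡ ∈ L²(0,1), the boundary value problem p̄(x) + ū'(x) = f̄(x), ū(x) + p̄'(x) = ḡ(x) on (0,1) with boundary conditions ū(0) = ū(1) = 0 has a unique solution (p̄, ū) ∈ H¹(0,1) × H¹₀(0,1). -/
/-!
Uniqueness is the skew-symmetry of `A`: the difference `(P, U)` of two solutions satisfies
`P' = -U`, `U' = -P`, so `(P U)' = -(P² + U²)`, and integrating over `[0,1]` with
`U(0) = U(1) = 0` gives `∫ (P² + U²) = 0`.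

Existence: the characteristic variables `w = p + u`, `z = p - u` decouple the system into
`w' = f + g - w` and `z' = g - f + z`. Solve both by Duhamel's formula from a common initial
value `c`, which gives `u(0) = 0`; the condition `u(1) = 0` reads `w(1) = z(1)`, an affine
equation in `c` with slope `e⁻¹ - e ≠ 0`. All derivatives are a.e. derivatives of absolutely
continuous functions, handled by the fundamental theorem of calculus for such functions.
-/

open MeasureTheory

/-- `(p, u, dp, du)` is a solution of the resolvent boundary value problem
`p + u' = f`, `u + p' = g` on `(0,1)` with `u(0) = u(1) = 0`, where `p, u` are
absolutely continuous on `[0,1]` with weak derivatives `dp, du ∈ L²(0,1)`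
(so `(p,u) ∈ H¹(0,1) × H¹₀(0,1)`). -/
def IsResolventSol (f g p u dp du : ℝ → ℝ) : Prop :=
  MemLp dp 2 (volume.restrict (Set.Ioo (0:ℝ) 1)) ∧
  MemLp du 2 (volume.restrict (Set.Ioo (0:ℝ) 1)) ∧
  IntervalIntegrable dp volume 0 1 ∧
  IntervalIntegrable du volume 0 1 ∧
  (∀ x ∈ Set.Icc (0:ℝ) 1, p x = p 0 + ∫ t in (0:ℝ)..x, dp t) ∧
  (∀ x ∈ Set.Icc (0:ℝ) 1, u x = u 0 + ∫ t in (0:ℝ)..x, du t) ∧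
  (∀ᵐ x ∂(volume.restrict (Set.Ioo (0:ℝ) 1)), p x + du x = f x) ∧
  (∀ᵐ x ∂(volume.restrict (Set.Ioo (0:ℝ) 1)), u x + dp x = g x) ∧
  u 0 = 0 ∧ u 1 = 0

open Set Filter

namespace AbsolutelyContinuousOnInterval

variable {F f : ℝ → ℝ} {a b : ℝ}

theorem congr {G : ℝ → ℝ} (hF : AbsolutelyContinuousOnInterval F a b)
    (hG : EqOn F G (uIcc a b)) : AbsolutelyContinuousOnInterval G a b := by
  refine Tendsto.congr' ?_ hF
  filter_upwards [mem_inf_of_right (mem_principal_self _)] with E hE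
  refine Finset.sum_congr rfl fun i hi => ?_
  rw [hG (hE.1 i hi).1, hG (hE.1 i hi).2]

theorem integral_eq_sub_of_ae_hasDerivAt (hF : AbsolutelyContinuousOnInterval F a b)
    (hderiv : ∀ᵐ x, x ∈ uIcc a b → HasDerivAt F (f x) x) :
    ∫ x in a..b, f x = F b - F a := by
  rw [← hF.integral_deriv_eq_sub]
  refine intervalIntegral.integral_congr_ae ?_
  filter_upwards [hderiv] with x hx hxab
  exact (hx (uIoc_subset_uIcc hxab)).deriv.symm

theorem eq_add_integral_of_ae_hasDerivAt (hF : AbsolutelyContinuousOnInterval F a b)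
    (hderiv : ∀ᵐ x, x ∈ uIcc a b → HasDerivAt F (f x) x) {x : ℝ} (hx : x ∈ uIcc a b) :
    F x = F a + ∫ t in a..x, f t := by
  have hsub : uIcc a x ⊆ uIcc a b := uIcc_subset_uIcc_left hx
  rw [(hF.mono hsub).integral_eq_sub_of_ae_hasDerivAt
    (hderiv.mono fun t ht hta => ht (hsub hta))]
  ring

end AbsolutelyContinuousOnInterval

section Primitive

variable {F f : ℝ → ℝ} {a b : ℝ}

theorem IntervalIntegrable.absolutelyContinuousOnInterval_of_eq_add_integral
    (hf : IntervalIntegrable f volume a b) (hF : ∀ x ∈ uIcc a b, F x = F a + ∫ t in a..x, f t) :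
    AbsolutelyContinuousOnInterval F a b :=
  ((contDiffOn_const (c := F a)).absolutelyContinuousOnInterval.fun_add
    (hf.absolutelyContinuousOnInterval_intervalIntegral left_mem_uIcc)).congr
    fun x hx => (hF x hx).symm

theorem IntervalIntegrable.ae_hasDerivAt_of_eq_add_integral
    (hf : IntervalIntegrable f volume a b) (hF : ∀ x ∈ uIcc a b, F x = F a + ∫ t in a..x, f t) :
    ∀ᵐ x, x ∈ uIcc a b → HasDerivAt F (f x) x := by
  have hendpoints : ∀ᵐ x : ℝ, x ∉ ({min a b, max a b} : Set ℝ) :=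
    (toFinite _).measure_zero volume |> measure_eq_zero_iff_ae_notMem.mp
  filter_upwards [hf.ae_hasDerivAt_integral, hendpoints] with x hx hxend hxab
  have hxIoo : x ∈ Ioo (min a b) (max a b) := by
    simp only [mem_insert_iff, mem_singleton_iff, not_or] at hxend
    exact ⟨lt_of_le_of_ne hxab.1 (Ne.symm hxend.1), lt_of_le_of_ne hxab.2 hxend.2⟩
  refine ((hx hxab a left_mem_uIcc).const_add (F a)).congr_of_eventuallyEq ?_
  filter_upwards [Ioo_mem_nhds hxIoo.1 hxIoo.2] with t ht
  exact hF t (Ioo_subset_Icc_self ht)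

end Primitive

section Interval

variable {f : ℝ → ℝ} {a b : ℝ}

theorem ae_uIcc_of_ae_restrict_Ioo (hab : a ≤ b) {P : ℝ → Prop}
    (h : ∀ᵐ x ∂volume.restrict (Ioo a b), P x) : ∀ᵐ x, x ∈ uIcc a b → P x := by
  rwa [uIcc_of_le hab, ← ae_restrict_iff' measurableSet_Icc,
    ← Measure.restrict_congr_set Ioo_ae_eq_Icc]

theorem MeasureTheory.MemLp.intervalIntegrable_of_restrict_Ioo {p : ENNReal}
    (hf : MemLp f p (volume.restrict (Ioo a b))) (hp : 1 ≤ p) (hab : a ≤ b) :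
    IntervalIntegrable f volume a b :=
  (intervalIntegrable_iff_integrableOn_Ioo_of_le hab).mpr (hf.integrable hp)

theorem ContinuousOn.memLp_restrict_Ioo (p : ENNReal) (hf : ContinuousOn f (Icc a b)) :
    MemLp f p (volume.restrict (Ioo a b)) := by
  obtain ⟨C, hC⟩ := isCompact_Icc.exists_bound_of_continuousOn hf
  refine (memLp_top_of_bound ((hf.mono Ioo_subset_Icc_self).aestronglyMeasurable
    measurableSet_Ioo) C ?_).mono_exponent le_top
  exact (ae_restrict_mem measurableSet_Ioo).mono fun x hx => hC x (Ioo_subset_Icc_self hx)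

theorem ContinuousOn.eqOn_zero_of_integral_eq_zero (hab : a < b) (hf : ContinuousOn f (Icc a b))
    (hf_nonneg : ∀ x ∈ Icc a b, 0 ≤ f x) (hint : ∫ x in a..b, f x = 0) : EqOn f 0 (Icc a b) := by
  have hnonneg : 0 ≤ᵐ[volume.restrict (Ioc a b)] f :=
    (ae_restrict_mem measurableSet_Ioc).mono fun x hx => hf_nonneg x (Ioc_subset_Icc_self hx)
  have hae := (intervalIntegral.integral_eq_zero_iff_of_le_of_nonneg_ae hab.le hnonneg
    (hf.intervalIntegrable_of_Icc hab.le)).mp hint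
  rw [Measure.restrict_congr_set Ioc_ae_eq_Icc] at hae
  exact Measure.eqOn_Icc_of_ae_eq volume hab.ne hae hf continuousOn_const

end Interval

noncomputable def duhamel (α c : ℝ) (φ : ℝ → ℝ) (x : ℝ) : ℝ :=
  Real.exp (α * x) * (c + ∫ t in (0:ℝ)..x, Real.exp (-α * t) * φ t)

section Duhamel

variable {α c b : ℝ} {φ : ℝ → ℝ}

@[simp]
theorem duhamel_zero : duhamel α c φ 0 = c := by
  simp [duhamel]

theorem IntervalIntegrable.exp_mul (hφ : IntervalIntegrable φ volume 0 b) (α : ℝ) :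
    IntervalIntegrable (fun t => Real.exp (α * t) * φ t) volume 0 b :=
  hφ.continuousOn_mul (by fun_prop)

theorem absolutelyContinuousOnInterval_duhamel (hφ : IntervalIntegrable φ volume 0 b) :
    AbsolutelyContinuousOnInterval (duhamel α c φ) 0 b := by
  have hexp : ContDiffOn ℝ 1 (fun x => Real.exp (α * x)) (uIcc 0 b) := by fun_prop
  have hprim := (hφ.exp_mul (-α)).absolutelyContinuousOnInterval_intervalIntegral left_mem_uIcc
  exact hexp.absolutelyContinuousOnInterval.fun_mul
    ((contDiffOn_const (c := c)).absolutelyContinuousOnInterval.fun_add hprim)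

theorem ae_hasDerivAt_duhamel (hφ : IntervalIntegrable φ volume 0 b) :
    ∀ᵐ x, x ∈ uIcc 0 b → HasDerivAt (duhamel α c φ) (φ x + α * duhamel α c φ x) x := by
  filter_upwards [(hφ.exp_mul (-α)).ae_hasDerivAt_integral] with x hx hxb
  have hexp : HasDerivAt (fun x => Real.exp (α * x)) (Real.exp (α * x) * α) x :=
    ((hasDerivAt_id x).const_mul α).exp.congr_deriv (by simp)
  have hcancel : Real.exp (α * x) * Real.exp (-α * x) = 1 := by
    rw [← Real.exp_add]; simp
  refine (hexp.fun_mul ((hx hxb 0 left_mem_uIcc).const_add c)).congr_deriv ?_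
  simp only [duhamel]
  linear_combination (φ x) * hcancel

end Duhamel

namespace IsResolventSol

variable {f g p u dp du : ℝ → ℝ}

theorem sub {p' u' dp' du' : ℝ → ℝ} (h : IsResolventSol f g p u dp du)
    (h' : IsResolventSol f g p' u' dp' du') :
    IsResolventSol 0 0 (p - p') (u - u') (dp - dp') (du - du') := by
  obtain ⟨hdp, hdu, hdpi, hdui, hp, hu, hpu, hup, hu0, hu1⟩ := h
  obtain ⟨hdp', hdu', hdpi', hdui', hp', hu', hpu', hup', hu0', hu1'⟩ := h'
  have hsub : ∀ x ∈ Icc (0:ℝ) 1, uIcc 0 x ⊆ uIcc 0 1 := fun x hx =>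
    uIcc_subset_uIcc_left (by rwa [uIcc_of_le zero_le_one])
  refine ⟨hdp.sub hdp', hdu.sub hdu', hdpi.sub hdpi', hdui.sub hdui', fun x hx => ?_,
    fun x hx => ?_, ?_, ?_, by simp [hu0, hu0'], by simp [hu1, hu1']⟩
  · simp only [Pi.sub_apply]
    rw [intervalIntegral.integral_sub (hdpi.mono_set (hsub x hx)) (hdpi'.mono_set (hsub x hx)),
      hp x hx, hp' x hx]
    ring
  · simp only [Pi.sub_apply]
    rw [intervalIntegral.integral_sub (hdui.mono_set (hsub x hx)) (hdui'.mono_set (hsub x hx)),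
      hu x hx, hu' x hx]
    ring
  · filter_upwards [hpu, hpu'] with x h₁ h₂
    simp only [Pi.sub_apply, Pi.zero_apply]
    linarith
  · filter_upwards [hup, hup'] with x h₁ h₂
    simp only [Pi.sub_apply, Pi.zero_apply]
    linarith

theorem eqOn_zero (h : IsResolventSol 0 0 p u dp du) :
    EqOn p 0 (Icc 0 1) ∧ EqOn u 0 (Icc 0 1) := by
  obtain ⟨-, -, hdpi, hdui, hp, hu, hpu, hup, hu0, hu1⟩ := h
  rw [← uIcc_of_le zero_le_one] at hp hu
  have hpac := hdpi.absolutelyContinuousOnInterval_of_eq_add_integral hp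
  have huac := hdui.absolutelyContinuousOnInterval_of_eq_add_integral hu
  have hderiv : ∀ᵐ x, x ∈ uIcc 0 1 →
      HasDerivAt (fun x => p x * u x) (-(p x ^ 2 + u x ^ 2)) x := by
    filter_upwards [hdpi.ae_hasDerivAt_of_eq_add_integral hp,
      hdui.ae_hasDerivAt_of_eq_add_integral hu, ae_uIcc_of_ae_restrict_Ioo zero_le_one hpu,
      ae_uIcc_of_ae_restrict_Ioo zero_le_one hup] with x hdpx hdux hpux hupx hx
    refine ((hdpx hx).mul (hdux hx)).congr_deriv ?_
    simp only [Pi.zero_apply] at hpux hupx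
    rw [eq_neg_of_add_eq_zero_right (hpux hx), eq_neg_of_add_eq_zero_right (hupx hx)]
    ring
  have henergy : ∫ x in (0:ℝ)..1, (p x ^ 2 + u x ^ 2) = 0 := by
    have := (hpac.fun_mul huac).integral_eq_sub_of_ae_hasDerivAt hderiv
    rw [intervalIntegral.integral_neg, hu0, hu1] at this
    linarith
  have hcont : ContinuousOn (fun x => p x ^ 2 + u x ^ 2) (Icc 0 1) := by
    rw [← uIcc_of_le zero_le_one]
    exact (hpac.continuousOn.pow 2).add (huac.continuousOn.pow 2)
  have hzero := hcont.eqOn_zero_of_integral_eq_zero zero_lt_one (fun _ _ => by positivity) henergy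
  have hpu_zero : ∀ x ∈ Icc (0:ℝ) 1, p x = 0 ∧ u x = 0 := fun x hx => by
    simpa using (add_eq_zero_iff_of_nonneg (sq_nonneg _) (sq_nonneg _)).mp (hzero hx)
  exact ⟨fun x hx => (hpu_zero x hx).1, fun x hx => (hpu_zero x hx).2⟩

end IsResolventSol

theorem isResolventSol_of_characteristics {f g w z : ℝ → ℝ}
    (hf : MemLp f 2 (volume.restrict (Ioo (0:ℝ) 1)))
    (hg : MemLp g 2 (volume.restrict (Ioo (0:ℝ) 1)))
    (hw : AbsolutelyContinuousOnInterval w 0 1) (hz : AbsolutelyContinuousOnInterval z 0 1)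
    (hw' : ∀ᵐ x, x ∈ uIcc 0 1 → HasDerivAt w (f x + g x - w x) x)
    (hz' : ∀ᵐ x, x ∈ uIcc 0 1 → HasDerivAt z (g x - f x + z x) x)
    (h0 : w 0 = z 0) (h1 : w 1 = z 1) :
    IsResolventSol f g (fun x => (w x + z x) / 2) (fun x => (w x - z x) / 2)
      (fun x => g x - (w x - z x) / 2) (fun x => f x - (w x + z x) / 2) := by
  have h01 : uIcc (0:ℝ) 1 = Icc 0 1 := uIcc_of_le zero_le_one
  have hp : AbsolutelyContinuousOnInterval (fun x => (w x + z x) / 2) 0 1 :=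
    ((hw.fun_add hz).const_mul (1 / 2)).congr fun x _ => by ring
  have hu : AbsolutelyContinuousOnInterval (fun x => (w x - z x) / 2) 0 1 :=
    ((hw.fun_sub hz).const_mul (1 / 2)).congr fun x _ => by ring
  have hp' : ∀ᵐ x, x ∈ uIcc 0 1 →
      HasDerivAt (fun x => (w x + z x) / 2) (g x - (w x - z x) / 2) x := by
    filter_upwards [hw', hz'] with x hwx hzx hx
    exact (((hwx hx).add (hzx hx)).div_const 2).congr_deriv (by ring)
  have hu' : ∀ᵐ x, x ∈ uIcc 0 1 →
      HasDerivAt (fun x => (w x - z x) / 2) (f x - (w x + z x) / 2) x := by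
    filter_upwards [hw', hz'] with x hwx hzx hx
    exact (((hwx hx).sub (hzx hx)).div_const 2).congr_deriv (by ring)
  have hpc := h01 ▸ hp.continuousOn
  have huc := h01 ▸ hu.continuousOn
  have hfi := hf.intervalIntegrable_of_restrict_Ioo one_le_two zero_le_one
  have hgi := hg.intervalIntegrable_of_restrict_Ioo one_le_two zero_le_one
  refine ⟨hg.sub (huc.memLp_restrict_Ioo 2), hf.sub (hpc.memLp_restrict_Ioo 2),
    hgi.sub (huc.intervalIntegrable_of_Icc zero_le_one),
    hfi.sub (hpc.intervalIntegrable_of_Icc zero_le_one),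
    fun x hx => hp.eq_add_integral_of_ae_hasDerivAt hp' (h01 ▸ hx),
    fun x hx => hu.eq_add_integral_of_ae_hasDerivAt hu' (h01 ▸ hx),
    ae_of_all _ fun x => by ring, ae_of_all _ fun x => by ring, ?_, ?_⟩ <;>
  simp only [h0, h1, sub_self, zero_div]

theorem exists_isResolventSol {f g : ℝ → ℝ}
    (hf : MemLp f 2 (volume.restrict (Ioo (0:ℝ) 1)))
    (hg : MemLp g 2 (volume.restrict (Ioo (0:ℝ) 1))) :
    ∃ p u dp du : ℝ → ℝ, IsResolventSol f g p u dp du := by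
  have hfgi := (hf.add hg).intervalIntegrable_of_restrict_Ioo one_le_two zero_le_one
  have hgfi := (hg.sub hf).intervalIntegrable_of_restrict_Ioo one_le_two zero_le_one
  obtain ⟨c, hc⟩ : ∃ c, duhamel (-1) c (f + g) 1 = duhamel 1 c (g - f) 1 := by
    have hsolve : ∀ a b A B : ℝ, a ≠ b → ∃ c, a * (c + A) = b * (c + B) := fun a b A B hab =>
      ⟨(b * B - a * A) / (a - b), by field_simp [sub_ne_zero.mpr hab]; ring⟩
    exact hsolve _ _ _ _ (Real.exp_injective.ne (by norm_num))
  refine ⟨_, _, _, _, isResolventSol_of_characteristics hf hg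
    (absolutelyContinuousOnInterval_duhamel hfgi) (absolutelyContinuousOnInterval_duhamel hgfi)
    ?_ ?_ (by simp only [duhamel_zero]) hc⟩
  · filter_upwards [ae_hasDerivAt_duhamel (α := -1) (c := c) hfgi] with x hx hx01
    exact (hx hx01).congr_deriv (by simp only [Pi.add_apply]; ring)
  · filter_upwards [ae_hasDerivAt_duhamel (α := 1) (c := c) hgfi] with x hx hx01
    exact (hx hx01).congr_deriv (by simp only [Pi.sub_apply]; ring)

/-- for any `f, g ∈ L²(0,1)` the boundary value problem
`p + u' = f`, `u + p' = g`, `u(0)=u(1)=0` has a solution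
`(p,u) ∈ H¹(0,1) × H¹₀(0,1)`, which is unique (as continuous representatives
on `[0,1]`). -/
theorem stmt1 (f g : ℝ → ℝ)
    (hf : MemLp f 2 (volume.restrict (Set.Ioo (0:ℝ) 1)))
    (hg : MemLp g 2 (volume.restrict (Set.Ioo (0:ℝ) 1))) :
    ∃ p u dp du : ℝ → ℝ, IsResolventSol f g p u dp du ∧
      ∀ p' u' dp' du' : ℝ → ℝ, IsResolventSol f g p' u' dp' du' →
        ∀ x ∈ Set.Icc (0:ℝ) 1, p x = p' x ∧ u x = u' x := by
  obtain ⟨p, u, dp, du, hsol⟩ := exists_isResolventSol hf hg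
  refine ⟨p, u, dp, du, hsol, fun p' u' dp' du' hsol' x hx => ?_⟩
  obtain ⟨hp, hu⟩ := (hsol.sub hsol').eqOn_zero
  exact ⟨sub_eq_zero.mp (hp hx), sub_eq_zero.mp (hu hx)⟩
end

section
/- Let H, K be Hilbert spaces, F : D(F) ⊂ H → K with derivative F' Lipschitz continuous with constant L on the convex set D(F). Suppose a† ∈ D(F) satisfies the approximate source condition a† − a* = F'(a†)* w + e with w ∈ K, e ∈ H and L‖w‖ < 1. Let a ∈ D(F) be any minimizer of J(a) = ‖F(a) − h^δ‖² + α‖a − a*‖² with ‖h^δ − F(a†)‖ ≤ δ. Then there is a constant C depending only on L‖w‖ such that ‖a − a†‖² ≤ C(δ²/α + α‖w‖² + δ‖w‖ + ‖e‖²). -/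
/-!
Minimality of `a` tested against `a†` gives
`‖F a - h^δ‖² + α‖a - a†‖² ≤ δ² + 2α⟪a† - a, a† - a*⟫`.
The source condition turns the inner product into `⟪F'(a†)(a† - a), w⟫ + ⟪a† - a, e⟫`, and
the second-order Taylor bound for a map with `L`-Lipschitz derivative controls
`‖F'(a†)(a† - a)‖` by the residual, the noise and `L/2 ‖a - a†‖²`. The quadratic term then
carries the factor `αL‖w‖ < α`, so it is absorbed by the left-hand side, and Young's inequality
removes the remaining cross terms.
-/

open Set

section Taylor

variable {E G : Type*} [NormedAddCommGroup E] [NormedSpace ℝ E]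
  [NormedAddCommGroup G] [NormedSpace ℝ G]
  {D : Set E} {F : E → G} {F' : E → E →L[ℝ] G} {L : ℝ}

theorem norm_sub_sub_fderiv_le_of_lipschitz_fderiv (hD : Convex ℝ D)
    (hF : ∀ b ∈ D, HasFDerivAt F (F' b) b)
    (hLip : ∀ b ∈ D, ∀ c ∈ D, ‖F' b - F' c‖ ≤ L * ‖b - c‖) {x y : E} (hx : x ∈ D) (hy : y ∈ D) :
    ‖F y - F x - F' x (y - x)‖ ≤ L / 2 * ‖y - x‖ ^ 2 := by
  set v := y - x
  have hseg : ∀ t ∈ Icc (0 : ℝ) 1, x + t • v ∈ D := fun t ht => hD.add_smul_sub_mem hx hy ht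
  -- `g t = F (x + t v) - F x - t F'(x) v` vanishes at `0`, and its derivative has norm `≤ L t ‖v‖²`.
  set g : ℝ → G := fun t => F (x + t • v) - t • F' x v - F x
  set g' : ℝ → G := fun t => (F' (x + t • v) - F' x) v
  have hg : ∀ t ∈ Icc (0 : ℝ) 1, HasDerivAt g (g' t) t := by
    intro t ht
    have hline : HasDerivAt (fun s : ℝ => x + s • v) v t := by
      simpa using ((hasDerivAt_id t).smul_const v).const_add x
    have := (((hF _ (hseg t ht)).comp_hasDerivAt t hline).sub
      ((hasDerivAt_id t).smul_const (F' x v))).sub_const (F x)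
    simpa [g, g'] using this
  have hg' : ∀ t ∈ Ico (0 : ℝ) 1, ‖g' t‖ ≤ L * ‖v‖ ^ 2 * t := by
    intro t ht
    calc ‖g' t‖ ≤ ‖F' (x + t • v) - F' x‖ * ‖v‖ := ContinuousLinearMap.le_opNorm _ _
      _ ≤ L * ‖x + t • v - x‖ * ‖v‖ := by
          gcongr; exact hLip _ (hseg t (Ico_subset_Icc_self ht)) _ hx
      _ = L * ‖v‖ ^ 2 * t := by
          rw [add_sub_cancel_left, norm_smul, Real.norm_of_nonneg ht.1]; ring
  have hB : ∀ t, HasDerivAt (fun t : ℝ => L * ‖v‖ ^ 2 / 2 * t ^ 2) (L * ‖v‖ ^ 2 * t) t :=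
    fun t => ((hasDerivAt_pow 2 t).const_mul (L * ‖v‖ ^ 2 / 2)).congr_deriv (by ring)
  have hbound := image_norm_le_of_norm_deriv_right_le_deriv_boundary
    (fun t ht => (hg t ht).continuousAt.continuousWithinAt)
    (fun t ht => (hg t (Ico_subset_Icc_self ht)).hasDerivWithinAt)
    (by simp [g]) hB hg' (right_mem_Icc.2 zero_le_one)
  have hg1 : g 1 = F y - F x - F' x v := by simp only [g, one_smul, v, add_sub_cancel]; abel
  rw [hg1] at hbound
  linarith

theorem norm_fderiv_apply_sub_le_of_lipschitz_fderiv (hD : Convex ℝ D)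
    (hF : ∀ b ∈ D, HasFDerivAt F (F' b) b)
    (hLip : ∀ b ∈ D, ∀ c ∈ D, ‖F' b - F' c‖ ≤ L * ‖b - c‖) {x y : E} (hx : x ∈ D) (hy : y ∈ D)
    (h : G) : ‖F' x (x - y)‖ ≤ ‖F y - h‖ + ‖h - F x‖ + L / 2 * ‖y - x‖ ^ 2 := by
  have hsplit : F' x (x - y) = (F y - F x - F' x (y - x)) - (F y - h) - (h - F x) := by
    rw [← neg_sub y x, map_neg]; abel
  rw [hsplit]
  have := norm_sub_sub_fderiv_le_of_lipschitz_fderiv hD hF hLip hx hy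
  linarith [norm_sub_le (F y - F x - F' x (y - x) - (F y - h)) (h - F x),
    norm_sub_le (F y - F x - F' x (y - x)) (F y - h)]

end Taylor

section Hilbert

variable {H K : Type*} [NormedAddCommGroup H] [InnerProductSpace ℝ H]

theorem tikhonov_minimizer_basic_estimate [NormedAddCommGroup K] {F : H → K} {α δ : ℝ}
    {a adag astar : H} {h : K} (hnoise : ‖h - F adag‖ ≤ δ)
    (hmin : ‖F a - h‖ ^ 2 + α * ‖a - astar‖ ^ 2 ≤ ‖F adag - h‖ ^ 2 + α * ‖adag - astar‖ ^ 2) :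
    ‖F a - h‖ ^ 2 + α * ‖a - adag‖ ^ 2
      ≤ δ ^ 2 + 2 * α * inner ℝ (adag - a) (adag - astar) := by
  have hexpand : ‖a - astar‖ ^ 2
      = ‖adag - astar‖ ^ 2 - 2 * inner ℝ (adag - a) (adag - astar) + ‖a - adag‖ ^ 2 := by
    rw [show a - astar = (adag - astar) - (adag - a) by abel, norm_sub_sq_real, real_inner_comm,
      norm_sub_rev adag a]
  have hdata : ‖F adag - h‖ ^ 2 ≤ δ ^ 2 :=
    pow_le_pow_left₀ (norm_nonneg _) (norm_sub_rev h (F adag) ▸ hnoise) 2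
  rw [hexpand] at hmin
  linarith

theorem real_inner_le_of_eq_adjoint_add [NormedAddCommGroup K] [InnerProductSpace ℝ K]
    [CompleteSpace H] [CompleteSpace K] (T : H →L[ℝ] K) {x v e : H} {w : K}
    (hv : v = T.adjoint w + e) : inner ℝ x v ≤ ‖T x‖ * ‖w‖ + ‖x‖ * ‖e‖ := by
  rw [hv, inner_add_right, ContinuousLinearMap.adjoint_inner_right]
  exact add_le_add (real_inner_le_norm _ _) (real_inner_le_norm _ _)

end Hilbert

/-- Applied with `t = ‖a - a†‖`, `s = ‖F a - h^δ‖`, `W = ‖w‖`, `E = ‖e‖`. -/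
theorem sq_le_of_tikhonov_estimate {s t W E L α δ ρ : ℝ} (hL : 0 ≤ L) (hW : 0 ≤ W)
    (hLW : L * W ≤ ρ) (hρ : ρ < 1) (hα : 0 < α) (hδ : 0 ≤ δ)
    (h : s ^ 2 + α * t ^ 2 ≤ δ ^ 2 + 2 * α * ((s + δ + L / 2 * t ^ 2) * W + t * E)) :
    t ^ 2 ≤ 4 / (1 - ρ) ^ 2 * (δ ^ 2 / α + α * W ^ 2 + δ * W + E ^ 2) := by
  set σ := 1 - ρ
  have hσ : 0 < σ := by linarith
  have hσ1 : σ ≤ 1 := by linarith [mul_nonneg hL hW]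
  have hquad : α * (L * W) * t ^ 2 ≤ α * ρ * t ^ 2 := by gcongr
  -- Young: `2αsW ≤ s² + α²W²`
  have habsorb : α * σ * t ^ 2 ≤ δ ^ 2 + α ^ 2 * W ^ 2 + 2 * α * δ * W + 2 * α * t * E := by
    nlinarith [sq_nonneg (s - α * W)]
  -- Young: `4σtE ≤ σ²t² + 4E²`
  have hyoung : 4 * σ * (t * E) ≤ σ ^ 2 * t ^ 2 + 4 * E ^ 2 := by
    nlinarith [sq_nonneg (σ * t - 2 * E)]
  have hαδW : 0 ≤ α * δ * W := by positivity
  have hpoly : α * σ ^ 2 * t ^ 2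
      ≤ 4 * (δ ^ 2 + α ^ 2 * W ^ 2 + α * δ * W + α * E ^ 2) := by
    nlinarith [mul_le_mul_of_nonneg_left habsorb (by positivity : (0 : ℝ) ≤ 2 * σ),
      mul_le_mul_of_nonneg_left hyoung hα.le, mul_le_mul_of_nonneg_left hσ1 hαδW,
      mul_le_mul_of_nonneg_left hσ1 (by positivity : (0 : ℝ) ≤ δ ^ 2 + α ^ 2 * W ^ 2)]
  rw [div_mul_eq_mul_div, le_div_iff₀ (by positivity)]
  calc t ^ 2 * σ ^ 2 = α * σ ^ 2 * t ^ 2 / α := by field_simp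
    _ ≤ 4 * (δ ^ 2 + α ^ 2 * W ^ 2 + α * δ * W + α * E ^ 2) / α := by gcongr
    _ = 4 * (δ ^ 2 / α + α * W ^ 2 + δ * W + E ^ 2) := by field_simp

/-- convergence rates for Tikhonov regularization under an
approximate source condition `a† − a* = F'(a†)* w + e` with `L‖w‖ < 1`:
any minimizer `a` of the Tikhonov functional with noise level `δ` satisfies
`‖a − a†‖² ≤ C (δ²/α + α‖w‖² + δ‖w‖ + ‖e‖²)`, where `C` depends only on
(a bound `ρ < 1` for) the size of `L‖w‖`. -/
theorem stmt7 (ρ : ℝ) (hρ : ρ < 1) :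
    ∃ C : ℝ, 0 < C ∧
      ∀ (H K : Type)
        [NormedAddCommGroup H] [InnerProductSpace ℝ H] [CompleteSpace H]
        [NormedAddCommGroup K] [InnerProductSpace ℝ K] [CompleteSpace K]
        (D : Set H) (F : H → K) (F' : H → H →L[ℝ] K)
        (L α δ : ℝ) (adag astar a : H) (hδdata : K) (w : K) (e : H),
        Convex ℝ D →
        (0 ≤ L) →
        (∀ b ∈ D, HasFDerivAt F (F' b) b) →
        (∀ b ∈ D, ∀ c ∈ D, ‖F' b - F' c‖ ≤ L * ‖b - c‖) →
        adag ∈ D → a ∈ D →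
        adag - astar = (F' adag).adjoint w + e →
        L * ‖w‖ ≤ ρ →
        0 < α → 0 ≤ δ →
        ‖hδdata - F adag‖ ≤ δ →
        (∀ b ∈ D, ‖F a - hδdata‖ ^ 2 + α * ‖a - astar‖ ^ 2
            ≤ ‖F b - hδdata‖ ^ 2 + α * ‖b - astar‖ ^ 2) →
        ‖a - adag‖ ^ 2 ≤ C * (δ ^ 2 / α + α * ‖w‖ ^ 2 + δ * ‖w‖ + ‖e‖ ^ 2) := by
  refine ⟨4 / (1 - ρ) ^ 2, div_pos four_pos (pow_pos (sub_pos.2 hρ) 2), ?_⟩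
  intro H K _ _ _ _ _ _ D F F' L α δ adag astar a hδdata w e hD hL hF hLip hadag ha
    hsource hLw hα hδ hnoise hmin
  have hbasic := tikhonov_minimizer_basic_estimate hnoise (hmin adag hadag)
  have hinner := real_inner_le_of_eq_adjoint_add (F' adag) (x := adag - a) hsource
  have hlin := norm_fderiv_apply_sub_le_of_lipschitz_fderiv hD hF hLip hadag ha hδdata
  refine sq_le_of_tikhonov_estimate hL (norm_nonneg w) hLw hρ hα hδ (hbasic.trans ?_)
  rw [norm_sub_rev adag a] at hinner
  gcongr
  calc inner ℝ (adag - a) (adag - astar) ≤ ‖F' adag (adag - a)‖ * ‖w‖ + ‖a - adag‖ * ‖e‖ := hinner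
    _ ≤ _ := by gcongr; linarith
end
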